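/- Every inert subnormal subgroup of a group is strongly inert. -/

import Mathlib

variable {G : Type*} [Group G]

/-- The conjugate subgroup `H^g = gHg⁻¹`. -/
def conjS (g : G) (H : Subgroup G) : Subgroup G :=
  H.map (MulAut.conj g).toMonoidHom

/-- `H` is inert in `G` if `|H : H ∩ H^g|` is finite for all `g`. -/
def Inert (H : Subgroup G) : Prop :=
  ∀ g : G, (conjS g H).relIndex H ≠ 0

/-- `H` is strongly inert if `|⟨H, H^g⟩ : H|` is finite for all `g`. -/
def StronglyInert (H : Subgroup G) : Prop :=
  ∀ g : G, H.relIndex (H ⊔ conjS g H) ≠ 0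

/-- `c` is a chain of successive normal inclusions of length `n`. -/
def SubnormalChain (c : ℕ → Subgroup G) (n : ℕ) : Prop :=
  ∀ i < n, c i ≤ c (i + 1) ∧ ∀ x ∈ c (i + 1), ∀ h ∈ c i, x * h * x⁻¹ ∈ c i

/-- `H` is subnormal in `G`. -/
def Subnormal (H : Subgroup G) : Prop :=
  ∃ n : ℕ, ∃ c : ℕ → Subgroup G, c 0 = H ∧ c n = ⊤ ∧ SubnormalChain c n

/-!
For a finite nonempty family of subgroups, each commensurable with the inert subgroup `H` and
subnormal of length `d` in their join `J`, we show that `J` is commensurable with `H`, by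
induction on `d` and then on the size of the family. Split off one member `X`; the join `Y` of
the others is commensurable with `H`, so `X ∩ Y` has finite index in `Y` and `X` has only finitely
many `Y`-conjugates. Their join `N` contains `X` and is normalised by `Y`, so `N ⊴ J = XY` and
`|J : N| ≤ |Y : X ∩ Y|`. The conjugates lie in the penultimate term of a series of `X` in `J`,
which is normal in `J`, so they are subnormal of length `d` in `N`; since `H` is inert they are
commensurable with `H`, and induction on `d` gives `N ~ H`, whence `J ~ H`.
-/

open Subgroup Pointwise

theorem conjS_eq_toConjAct_smul (g : G) (A : Subgroup G) :
    conjS g A = ConjAct.toConjAct g • A := rfl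

theorem conjS_mul (g h : G) (A : Subgroup G) : conjS (g * h) A = conjS g (conjS h A) := by
  simp only [conjS_eq_toConjAct_smul, map_mul, mul_smul]

theorem conjS_one (A : Subgroup G) : conjS 1 A = A := by
  simp only [conjS_eq_toConjAct_smul, map_one, one_smul]

theorem conjS_mono {A B : Subgroup G} (g : G) (h : A ≤ B) : conjS g A ≤ conjS g B :=
  map_mono h

theorem conjS_eq_self_of_mem_normalizer {g : G} {A : Subgroup G} (hg : g ∈ normalizer A) :
    conjS g A = A :=
  mem_normalizer_iff_map_conj_eq.mp hg

theorem conjS_top (g : G) : conjS g (⊤ : Subgroup G) = ⊤ :=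
  conjS_eq_self_of_mem_normalizer (le_normalizer (mem_top g))

theorem conjS_le_normalizer_conjS {J K : Subgroup G} (g : G) (h : J ≤ normalizer K) :
    conjS g J ≤ normalizer (conjS g K) :=
  (map_mono h).trans (le_normalizer_map _)

theorem le_normalizer_of_conjS_le {Y N : Subgroup G} (h : ∀ y ∈ Y, conjS y N ≤ N) :
    Y ≤ normalizer N :=
  le_normalizer_iff.mpr fun y hy _ hk => h y hy (mem_map_of_mem _ hk)

theorem Subgroup.Commensurable.conjS {X H : Subgroup G} (h : X.Commensurable H) (g : G) :
    (_root_.conjS g X).Commensurable (_root_.conjS g H) :=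
  h.conj (ConjAct.toConjAct g)

theorem Subgroup.Commensurable.of_le {H K : Subgroup G} (hHK : H ≤ K) (h : H.relIndex K ≠ 0) :
    K.Commensurable H :=
  ⟨(relIndex_eq_one.mpr hHK).symm ▸ one_ne_zero, h⟩

theorem Inert.commensurable_conjS {H : Subgroup G} (hH : Inert H) (g : G) :
    (conjS g H).Commensurable H := by
  refine ⟨hH g, ?_⟩
  have h := relIndex_pointwise_smul (ConjAct.toConjAct g) (conjS g⁻¹ H) H
  rw [← conjS_eq_toConjAct_smul, ← conjS_eq_toConjAct_smul, ← conjS_mul, mul_inv_cancel,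
    conjS_one] at h
  exact h ▸ hH g⁻¹

theorem Subgroup.relIndex_sup_right_of_le_normalizer {H K : Subgroup G}
    (h : H ≤ normalizer K) : K.relIndex (H ⊔ K) = K.relIndex H := by
  have := normal_subgroupOf_of_le_normalizer h
  have := normal_subgroupOf_sup_of_le_normalizer h
  exact Nat.card_congr (QuotientGroup.quotientInfEquivProdNormalizerQuotient H K h).toEquiv.symm

theorem finite_range_conjS_of_relIndex_ne_zero {X Y : Subgroup G} (h : X.relIndex Y ≠ 0) :
    (Set.range fun y : Y => conjS (y : G) X).Finite := by
  have : Finite (Y ⧸ X.subgroupOf Y) := Nat.finite_of_card_ne_zero h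
  refine (Set.finite_range fun q : Y ⧸ X.subgroupOf Y => conjS (q.out : G) X).subset ?_
  rintro _ ⟨y, rfl⟩
  obtain ⟨x, hx⟩ := QuotientGroup.mk_out_eq_mul (X.subgroupOf Y) y
  refine ⟨y, ?_⟩
  dsimp only
  rw [hx, coe_mul, conjS_mul,
    conjS_eq_self_of_mem_normalizer (le_normalizer (mem_subgroupOf.mp x.2))]

theorem conjS_iSup_conjS_le {X Y : Subgroup G} {g : G} (hg : g ∈ Y) :
    conjS g (⨆ y : Y, conjS (y : G) X) ≤ ⨆ y : Y, conjS (y : G) X := by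
  rw [conjS, Subgroup.map_iSup]
  refine iSup_le fun y => ?_
  change conjS g (conjS (y : G) X) ≤ _
  rw [← conjS_mul]
  exact le_iSup (fun y : Y => conjS (y : G) X) ⟨g * y, Y.mul_mem hg y.2⟩

theorem iSup_conjS_le {X Y K : Subgroup G} (hXK : X ≤ K) (hYK : Y ≤ normalizer K) :
    ⨆ y : Y, conjS (y : G) X ≤ K :=
  iSup_le fun y => conjS_eq_self_of_mem_normalizer (hYK y.2) ▸ conjS_mono _ hXK

theorem relIndex_iSup_conjS_ne_zero {X Y : Subgroup G} (h : X.relIndex Y ≠ 0) :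
    (⨆ y : Y, conjS (y : G) X).relIndex (X ⊔ Y) ≠ 0 := by
  set N := ⨆ y : Y, conjS (y : G) X
  have hXN : X ≤ N := conjS_one X ▸ le_iSup (fun y : Y => conjS (y : G) X) 1
  have hYN : Y ≤ normalizer N := le_normalizer_of_conjS_le fun _ hy => conjS_iSup_conjS_le hy
  refine mt (relIndex_eq_zero_of_le_right (sup_le (hXN.trans le_sup_right) le_sup_left)) ?_
  rw [relIndex_sup_right_of_le_normalizer hYN]
  exact ne_zero_of_dvd_ne_zero h (relIndex_dvd_of_le_left Y hXN)

/-- A subnormal series `X = K₀ ⊴ K₁ ⊴ ⋯ ⊴ K_d = J` of length `d`. -/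
def Subgroup.IsSubnormalIn (X : Subgroup G) : Subgroup G → ℕ → Prop
  | J, 0 => X = J
  | J, d + 1 => ∃ K : Subgroup G, X.IsSubnormalIn K d ∧ K ≤ J ∧ J ≤ normalizer K

namespace Subgroup.IsSubnormalIn

variable {X J : Subgroup G} {d : ℕ}

theorem le (h : X.IsSubnormalIn J d) : X ≤ J := by
  induction d generalizing J with
  | zero => exact le_of_eq h
  | succ d ih =>
    obtain ⟨K, hK, hKJ, -⟩ := h
    exact (ih hK).trans hKJ

theorem restrict {L : Subgroup G} (h : X.IsSubnormalIn J d) (hXL : X ≤ L) (hLJ : L ≤ J) :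
    X.IsSubnormalIn L d := by
  induction d generalizing J L with
  | zero => exact le_antisymm hXL (h ▸ hLJ)
  | succ d ih =>
    obtain ⟨K, hK, hKJ, hJK⟩ := h
    exact ⟨K ⊓ L, ih hK (le_inf hK.le hXL) inf_le_left, inf_le_right,
      (le_inf (hLJ.trans hJK) le_normalizer).trans inf_normalizer_le_normalizer_inf⟩

theorem conjS (h : X.IsSubnormalIn J d) (g : G) :
    (_root_.conjS g X).IsSubnormalIn (_root_.conjS g J) d := by
  induction d generalizing J with
  | zero => exact congrArg _ h
  | succ d ih =>
    obtain ⟨K, hK, hKJ, hJK⟩ := h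
    exact ⟨_root_.conjS g K, ih hK, conjS_mono g hKJ, conjS_le_normalizer_conjS g hJK⟩

theorem conjS_iSup_conjS {Y : Subgroup G} (h : X.IsSubnormalIn J d) (hY : Y ≤ normalizer J)
    (y : Y) : (_root_.conjS (y : G) X).IsSubnormalIn (⨆ y : Y, _root_.conjS (y : G) X) d := by
  have hJ := conjS_eq_self_of_mem_normalizer (hY y.2)
  exact (hJ ▸ h.conjS y).restrict (le_iSup (fun y : Y => _root_.conjS (y : G) X) y)
    (iSup_conjS_le h.le hY)

end Subgroup.IsSubnormalIn

theorem isSubnormalIn_of_subnormalChain {c : ℕ → Subgroup G} {n : ℕ} (hc : SubnormalChain c n) :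
    (c 0).IsSubnormalIn (c n) n := by
  induction n with
  | zero => rfl
  | succ n ih =>
    obtain ⟨hle, hnorm⟩ := hc n n.lt_succ_self
    exact ⟨c n, ih fun i hi => hc i (hi.trans n.lt_succ_self), hle, le_normalizer_iff.mpr hnorm⟩

theorem Inert.commensurable_sSup {H : Subgroup G} (hH : Inert H) {d : ℕ}
    {S : Finset (Subgroup G)} (hS : S.Nonempty) (hcomm : ∀ X ∈ S, X.Commensurable H)
    (hsub : ∀ X ∈ S, X.IsSubnormalIn (sSup S) d) :
    (sSup (S : Set (Subgroup G))).Commensurable H := by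
  induction d generalizing S with
  | zero =>
    obtain ⟨X, hX⟩ := hS
    exact (hsub X hX : X = _) ▸ hcomm X hX
  | succ d ihd =>
    induction hS using Finset.Nonempty.cons_induction with
    | singleton X => simpa using hcomm X (Finset.mem_singleton_self X)
    | cons X T _ _ ihT =>
      simp only [Finset.mem_cons, forall_eq_or_imp, Finset.coe_cons, sSup_insert] at hcomm hsub ⊢
      set Y := sSup (T : Set (Subgroup G))
      have hY : Y.Commensurable H := ihT hcomm.2 fun Z hZ =>
        (hsub.2 Z hZ).restrict (le_sSup hZ) le_sup_right
      obtain ⟨K, hXK, -, hJK⟩ := hsub.1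
      have hXY : X.relIndex Y ≠ 0 := (hcomm.1.trans hY.symm).1
      have hN : (⨆ y : Y, conjS (y : G) X).Commensurable H := by
        have hC := finite_range_conjS_of_relIndex_ne_zero hXY
        have key := @ihd hC.toFinset
        simp only [Set.Finite.toFinset_nonempty, Set.Finite.mem_toFinset, Set.Finite.coe_toFinset,
          Set.forall_mem_range, sSup_range, Set.range_nonempty_iff_nonempty] at key
        exact key ⟨1⟩ (fun y => (hcomm.1.conjS y).trans (hH.commensurable_conjS y))
          (hXK.conjS_iSup_conjS (le_sup_right.trans hJK))
      have hNJ : ⨆ y : Y, conjS (y : G) X ≤ X ⊔ Y :=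
        iSup_conjS_le le_sup_left (le_sup_right.trans le_normalizer)
      have hJN : (X ⊔ Y).Commensurable (⨆ y : Y, conjS (y : G) X) :=
        Commensurable.of_le hNJ (relIndex_iSup_conjS_ne_zero hXY)
      exact hJN.trans hN

/-- Every inert subnormal subgroup is strongly inert. -/
theorem stronglyInert_of_inert_subnormal (H : Subgroup G)
    (hin : Inert H) (hsn : Subnormal H) : StronglyInert H := by
  classical
  intro g
  obtain ⟨n, c, hc0, hcn, hc⟩ := hsn
  have hH : H.IsSubnormalIn ⊤ n := hc0 ▸ hcn ▸ isSubnormalIn_of_subnormalChain hc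
  have hHg : (conjS g H).IsSubnormalIn ⊤ n := by simpa only [conjS_top] using hH.conjS g
  have key := hin.commensurable_sSup (d := n) (S := {H, conjS g H}) (Finset.insert_nonempty _ _)
  simp only [Finset.mem_insert, Finset.mem_singleton, forall_eq_or_imp, forall_eq,
    Finset.coe_pair, sSup_pair] at key
  exact (key ⟨Commensurable.refl H, hin.commensurable_conjS g⟩
    ⟨hH.restrict le_sup_left le_top, hHg.restrict le_sup_right le_top⟩).2
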